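/- Let G be a group, r ≥ 1, and let θ be the automorphism of G^r given by θ(x_1, …, x_r) = (x_2, …, x_r, τ(x_1)) for a fixed automorphism τ of G. For g = (g_1, …, g_r) ∈ G^r set ḡ = g_1 g_2 ⋯ g_r ∈ G. Then two elements g, g' ∈ G^r are 'twisted conjugate' (i.e., there exists x ∈ G^r with x · g · θ(x)^{-1} = g') if and only if there exists x_1 ∈ G with x_1 · ḡ · τ(x_1)^{-1} = ḡ'. -/

import Mathlib

/-!
Put `y = (x_1, …, x_r, τ x_1) ∈ G^(r+1)`. Twisted conjugacy by `x` says `g'_i = y_i g_i y_(i+1)⁻¹`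
for all `i`, and these equations hold iff `y_(j+1) = (g'_1⋯g'_j)⁻¹ y_1 (g_1⋯g_j)` for `0 ≤ j ≤ r`.
Read at the last index, the constraint `y_(r+1) = τ y_1` becomes `x_1 ḡ (τ x_1)⁻¹ = ḡ'`;
conversely any such `x_1` defines `y` by that formula.
-/

namespace Fin

variable {G : Type*} [Group G] {n : ℕ}

theorem partialProd_last {M : Type*} [Monoid M] (f : Fin n → M) :
    partialProd f (last n) = (List.ofFn f).prod := by
  simp [partialProd, List.take_of_length_le]

theorem forall_castSucc_mul_mul_inv_succ_eq_iff (g g' : Fin n → G) (y : Fin (n + 1) → G) :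
    (∀ i, y i.castSucc * g i * (y i.succ)⁻¹ = g' i) ↔
      ∀ j, y j = (partialProd g' j)⁻¹ * y 0 * partialProd g j := by
  constructor
  · intro h j
    induction j using Fin.induction with
    | zero => simp
    | succ i ih =>
      rw [partialProd_succ, partialProd_succ, ← h i, ih]
      group
  · intro h i
    rw [h i.castSucc, h i.succ, partialProd_succ, partialProd_succ]
    group

theorem exists_castSucc_mul_mul_inv_succ_eq_iff (g g' : Fin n → G) (a b : G) :
    (∃ y : Fin (n + 1) → G, y 0 = a ∧ y (last n) = b ∧
        ∀ i, y i.castSucc * g i * (y i.succ)⁻¹ = g' i) ↔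
      a * (List.ofFn g).prod * b⁻¹ = (List.ofFn g').prod := by
  simp only [forall_castSucc_mul_mul_inv_succ_eq_iff, ← partialProd_last]
  constructor
  · rintro ⟨y, rfl, rfl, hy⟩
    rw [hy (last n)]
    group
  · intro h
    refine ⟨fun j => (partialProd g' j)⁻¹ * a * partialProd g j, by simp, ?_, fun j => by simp⟩
    simp only [← h]
    group

end Fin

theorem cyclicTwist_apply_eq_snoc_succ {G : Type*} [Group G] {n : ℕ} (τ : G ≃* G)
    (θ : (Fin (n + 1) → G) → (Fin (n + 1) → G))
    (hθ : ∀ (x : Fin (n + 1) → G) (i : Fin (n + 1)),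
      θ x i = if h : (i : ℕ) + 1 < n + 1 then x ⟨(i : ℕ) + 1, h⟩ else τ (x ⟨0, by omega⟩))
    (x : Fin (n + 1) → G) (i : Fin (n + 1)) :
    θ x i = Fin.snoc (α := fun _ => G) x (τ (x 0)) i.succ := by
  rw [hθ]
  split_ifs with h
  · exact (Fin.snoc_castSucc (α := fun _ => G) (i := ⟨i + 1, h⟩) ..).symm
  · obtain rfl : i = Fin.last n := Fin.ext (by simp; omega)
    simp

/-- For the twist `θ(x_1,…,x_r) = (x_2,…,x_r,τ(x_1))` of `G^r`, two elements `g, g'` of `G^r`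
are twisted conjugate (`∃ x, x · g · θ(x)⁻¹ = g'`) iff the products `ḡ = g_1⋯g_r` and
`ḡ' = g'_1⋯g'_r` are `τ`-twisted conjugate in `G`. -/
theorem stmt1 (G : Type*) [Group G] (r : ℕ) (hr : 1 ≤ r) (τ : G ≃* G)
    (θ : (Fin r → G) → (Fin r → G))
    (hθ : ∀ (x : Fin r → G) (i : Fin r),
      θ x i = if h : (i : ℕ) + 1 < r then x ⟨(i : ℕ) + 1, h⟩ else τ (x ⟨0, by omega⟩))
    (g g' : Fin r → G) :
    (∃ x : Fin r → G, ∀ i, x i * g i * (θ x i)⁻¹ = g' i) ↔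
      ∃ x₁ : G, x₁ * (List.ofFn g).prod * (τ x₁)⁻¹ = (List.ofFn g').prod := by
  obtain ⟨n, rfl⟩ : ∃ n, r = n + 1 := ⟨r - 1, by omega⟩
  simp only [← Fin.exists_castSucc_mul_mul_inv_succ_eq_iff, cyclicTwist_apply_eq_snoc_succ τ θ hθ]
  constructor
  · rintro ⟨x, hx⟩
    exact ⟨x 0, Fin.snoc x (τ (x 0)), by simp, by simp, by simpa using hx⟩
  · rintro ⟨a, y, rfl, hy_last, hy⟩
    have hy_snoc : Fin.snoc (α := fun _ => G) (Fin.init y) (τ (y 0)) = y := by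
      rw [← hy_last, Fin.snoc_init_self]
    exact ⟨Fin.init y, fun i => by rw [show Fin.init y 0 = y 0 from rfl, hy_snoc]; exact hy i⟩
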